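/- Let \varphi be an analytic self-map of the unit disk with \varphi \in S^p and \|\varphi\|_\infty < 1. Then D_\varphi: S^p \to S^p is compact: whenever (f_n) is a bounded sequence in S^p converging to 0 uniformly on compact subsets of the disk, \|D_\varphi f_n\|_{S^p} \to 0. -/

import Mathlib

open Metric Complex Filter

/-- The `p`-th power mean of `|g|^p` on the circle of radius `r`. -/
noncomputable def hpInt (p : ℝ) (g : ℂ → ℂ) (r : ℝ) : ℝ :=
  ∫ θ in (0 : ℝ)..(2 * Real.pi), ‖g (r * Complex.exp (θ * Complex.I))‖ ^ p / (2 * Real.pi)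

/-- Membership in the Hardy space `H^p`. -/
def MemHp (p : ℝ) (g : ℂ → ℂ) : Prop :=
  DifferentiableOn ℂ g (ball 0 1) ∧ BddAbove (hpInt p g '' Set.Ioo (0 : ℝ) 1)

/-- The `H^p` norm. -/
noncomputable def hpNorm (p : ℝ) (g : ℂ → ℂ) : ℝ :=
  (sSup (hpInt p g '' Set.Ioo (0 : ℝ) 1)) ^ (1 / p)

/-- Membership in `S^p`: `f` analytic on the disk with `f' ∈ H^p`. -/
def MemSp (p : ℝ) (f : ℂ → ℂ) : Prop :=
  DifferentiableOn ℂ f (ball 0 1) ∧ MemHp p (deriv f)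

/-- The `S^p` norm `‖f‖ = |f(0)| + ‖f'‖_{H^p}`. -/
noncomputable def spNorm (p : ℝ) (f : ℂ → ℂ) : ℝ :=
  ‖f 0‖ + hpNorm p (deriv f)

/-!
Since `‖φ‖_∞ ≤ M < 1`, the image of `φ` lies in the compact disk `|w| ≤ M`, on which
`f_n'` and `f_n''` tend to `0` uniformly (Weierstrass). Hence `f_n'(φ(0)) → 0`, and by the
chain rule `|(f_n' ∘ φ)'| = |f_n'' ∘ φ| |φ'| ≤ (sup_{|w| ≤ M} |f_n''|) |φ'|`, so
`‖(f_n' ∘ φ)'‖_{H^p} ≤ (sup_{|w| ≤ M} |f_n''|) ‖φ'‖_{H^p} → 0`.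
-/

lemma hpInt_nonneg (p : ℝ) (g : ℂ → ℂ) (r : ℝ) : 0 ≤ hpInt p g r :=
  intervalIntegral.integral_nonneg Real.two_pi_pos.le fun _ _ => by positivity

lemma sSup_hpInt_nonneg (p : ℝ) (g : ℂ → ℂ) : 0 ≤ sSup (hpInt p g '' Set.Ioo 0 1) :=
  Real.sSup_nonneg <| Set.forall_mem_image.2 fun r _ => hpInt_nonneg p g r

lemma hpNorm_nonneg (p : ℝ) (g : ℂ → ℂ) : 0 ≤ hpNorm p g :=
  Real.rpow_nonneg (sSup_hpInt_nonneg p g) _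

lemma ofReal_mul_exp_mem_ball {r : ℝ} (hr : r ∈ Set.Ioo (0 : ℝ) 1) (θ : ℝ) :
    (r : ℂ) * exp (θ * I) ∈ ball (0 : ℂ) 1 := by
  simp [Complex.norm_exp, abs_of_pos hr.1, hr.2]

lemma intervalIntegrable_hpInt_integrand {p : ℝ} (hp : 0 ≤ p) {g : ℂ → ℂ}
    (hg : ContinuousOn g (ball 0 1)) {r : ℝ} (hr : r ∈ Set.Ioo (0 : ℝ) 1) :
    IntervalIntegrable (fun θ : ℝ => ‖g (r * exp (θ * I))‖ ^ p / (2 * Real.pi))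
      MeasureTheory.volume 0 (2 * Real.pi) := by
  have hcircle : Continuous fun θ : ℝ => (r : ℂ) * exp (θ * I) := by fun_prop
  refine ContinuousOn.intervalIntegrable (ContinuousOn.div_const ?_ _)
  exact ((hg.comp hcircle.continuousOn fun θ _ => ofReal_mul_exp_mem_ball hr θ).norm).rpow_const
    fun _ _ => Or.inr hp

lemma hpInt_le_mul_of_norm_le {p : ℝ} (hp : 0 ≤ p) {u v : ℂ → ℂ} {δ : ℝ} (hδ : 0 ≤ δ)
    (hu : ContinuousOn u (ball 0 1)) (hv : ContinuousOn v (ball 0 1))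
    (huv : ∀ z ∈ ball (0 : ℂ) 1, ‖u z‖ ≤ δ * ‖v z‖) {r : ℝ} (hr : r ∈ Set.Ioo (0 : ℝ) 1) :
    hpInt p u r ≤ δ ^ p * hpInt p v r := by
  rw [hpInt, hpInt, ← intervalIntegral.integral_const_mul]
  refine intervalIntegral.integral_mono_on Real.two_pi_pos.le
    (intervalIntegrable_hpInt_integrand hp hu hr)
    ((intervalIntegrable_hpInt_integrand hp hv hr).const_mul _) fun θ _ => ?_
  rw [← mul_div_assoc, ← Real.mul_rpow hδ (norm_nonneg _)]
  gcongr
  exact huv _ (ofReal_mul_exp_mem_ball hr θ)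

lemma hpNorm_le_mul_of_norm_le {p : ℝ} (hp : 0 < p) {u v : ℂ → ℂ} {δ : ℝ} (hδ : 0 ≤ δ)
    (hu : ContinuousOn u (ball 0 1)) (hv : MemHp p v)
    (huv : ∀ z ∈ ball (0 : ℂ) 1, ‖u z‖ ≤ δ * ‖v z‖) :
    hpNorm p u ≤ δ * hpNorm p v := by
  have hsSup : sSup (hpInt p u '' Set.Ioo 0 1) ≤ δ ^ p * sSup (hpInt p v '' Set.Ioo 0 1) := by
    refine Real.sSup_le (Set.forall_mem_image.2 fun r hr => ?_)
      (mul_nonneg (by positivity) (sSup_hpInt_nonneg p v))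
    calc hpInt p u r ≤ δ ^ p * hpInt p v r :=
          hpInt_le_mul_of_norm_le hp.le hδ hu hv.1.continuousOn huv hr
      _ ≤ δ ^ p * sSup (hpInt p v '' Set.Ioo 0 1) := by
          gcongr
          exact le_csSup hv.2 (Set.mem_image_of_mem _ hr)
  calc hpNorm p u ≤ (δ ^ p * sSup (hpInt p v '' Set.Ioo 0 1)) ^ (1 / p) :=
        Real.rpow_le_rpow (sSup_hpInt_nonneg p u) hsSup (by positivity)
    _ = δ * hpNorm p v := by
        rw [hpNorm, Real.mul_rpow (by positivity) (sSup_hpInt_nonneg p v), one_div,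
          Real.rpow_rpow_inv hδ hp.ne']

lemma hpNorm_deriv_comp_le_mul {p : ℝ} (hp : 0 < p) {g φ : ℂ → ℂ} {K : Set ℂ}
    (hg : DifferentiableOn ℂ g (ball 0 1)) (hφ : MemSp p φ) (hφK : Set.MapsTo φ (ball 0 1) K)
    (hK : K ⊆ ball 0 1) {δ : ℝ} (hδ : 0 ≤ δ) (hg' : ∀ w ∈ K, ‖deriv g w‖ ≤ δ) :
    hpNorm p (deriv fun z => g (φ z)) ≤ δ * hpNorm p (deriv φ) := by
  have hcomp : DifferentiableOn ℂ (fun z => g (φ z)) (ball 0 1) :=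
    hg.comp hφ.1 (hφK.mono_right hK)
  refine hpNorm_le_mul_of_norm_le hp hδ
    ((hcomp.analyticOnNhd isOpen_ball).deriv.continuousOn) hφ.2 fun z hz => ?_
  have hchain : deriv (fun z => g (φ z)) z = deriv g (φ z) * deriv φ z :=
    ((hg.differentiableAt (isOpen_ball.mem_nhds (hK (hφK hz)))).hasDerivAt.comp z
      (hφ.1.differentiableAt (isOpen_ball.mem_nhds hz)).hasDerivAt).deriv
  rw [hchain, norm_mul]
  gcongr
  exact hg' _ (hφK hz)

lemma tendsto_zero_of_forall_pos_eventually_le_mul {α : Type*} {l : Filter α} {a : α → ℝ}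
    {C : ℝ} (ha : ∀ x, 0 ≤ a x) (h : ∀ δ > 0, ∀ᶠ x in l, a x ≤ δ * C) :
    Tendsto a l (nhds 0) := by
  refine tendsto_order.2 ⟨fun ε hε => Eventually.of_forall fun x => hε.trans_le (ha x),
    fun ε hε => ?_⟩
  filter_upwards [h (ε / (|C| + 1)) (by positivity)] with x hx
  calc a x ≤ ε / (|C| + 1) * C := hx
    _ ≤ ε / (|C| + 1) * |C| := by gcongr; exact le_abs_self C
    _ < ε := by
        rw [div_mul_eq_mul_div, div_lt_iff₀ (by positivity)]
        linarith

theorem stmt4_general (p : ℝ) (hp : 1 < p) (φ : ℂ → ℂ)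
    (hφSp : MemSp p φ)
    (M : ℝ) (hM : M < 1) (hφsup : ∀ z ∈ ball (0 : ℂ) 1, ‖φ z‖ ≤ M)
    (f : ℕ → ℂ → ℂ) (hfSp : ∀ n, MemSp p (f n))
    (hunif : ∀ K : Set ℂ, K ⊆ ball 0 1 → IsCompact K →
      TendstoUniformlyOn f 0 atTop K) :
    Tendsto (fun n => spNorm p (fun z => deriv (f n) (φ z))) atTop (nhds 0) := by
  have hφK : Set.MapsTo φ (ball 0 1) (closedBall 0 M) :=
    fun z hz => mem_closedBall_zero_iff.2 (hφsup z hz)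
  have hK : closedBall (0 : ℂ) M ⊆ ball 0 1 := closedBall_subset_ball hM
  have hf'_diff : ∀ n, DifferentiableOn ℂ (deriv (f n)) (ball 0 1) :=
    fun n => ((hfSp n).1.analyticOnNhd isOpen_ball).deriv.differentiableOn
  have hf' : TendstoLocallyUniformlyOn (deriv ∘ f) 0 atTop (ball 0 1) := by
    have hf := (tendstoLocallyUniformlyOn_iff_forall_isCompact isOpen_ball).2 hunif
    simpa only [deriv_zero] using hf.deriv (Eventually.of_forall fun n => (hfSp n).1) isOpen_ball
  have hf'' : TendstoUniformlyOn (deriv ∘ (deriv ∘ f)) 0 atTop (closedBall 0 M) := by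
    have := hf'.deriv (Eventually.of_forall hf'_diff) isOpen_ball
    rw [deriv_zero, tendstoLocallyUniformlyOn_iff_forall_isCompact isOpen_ball] at this
    exact this _ hK (isCompact_closedBall 0 M)
  have hvalue : Tendsto (fun n => ‖deriv (f n) (φ 0)‖) atTop (nhds 0) := by
    simpa using (hf'.tendsto_at (hK (hφK (mem_ball_self one_pos)))).norm
  have hderiv : Tendsto (fun n => hpNorm p (deriv fun z => deriv (f n) (φ z))) atTop (nhds 0) := by
    refine tendsto_zero_of_forall_pos_eventually_le_mul (C := hpNorm p (deriv φ))
      (fun n => hpNorm_nonneg _ _) fun δ hδ => ?_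
    filter_upwards [Metric.tendstoUniformlyOn_iff.1 hf'' δ hδ] with n hn
    exact hpNorm_deriv_comp_le_mul (by linarith) (hf'_diff n) hφSp hφK hK hδ.le
      fun w hw => by simpa using (hn w hw).le
  simpa [spNorm] using hvalue.add hderiv

/-- If `φ` is an analytic self-map of the disk with `φ ∈ S^p` and `‖φ‖_∞ < 1`, then
`D_φ : S^p → S^p` is compact: for any bounded sequence in `S^p` tending to `0`
uniformly on compact subsets of the disk, `‖D_φ fₙ‖_{S^p} → 0`. -/
theorem stmt4 (p : ℝ) (hp : 1 < p) (φ : ℂ → ℂ)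
    (hφan : DifferentiableOn ℂ φ (ball 0 1))
    (hφmap : Set.MapsTo φ (ball 0 1) (ball 0 1))
    (hφSp : MemSp p φ)
    (M : ℝ) (hM : M < 1) (hφsup : ∀ z ∈ ball (0 : ℂ) 1, ‖φ z‖ ≤ M)
    (f : ℕ → ℂ → ℂ) (hfSp : ∀ n, MemSp p (f n))
    (hbdd : ∃ B : ℝ, ∀ n, spNorm p (f n) ≤ B)
    (hunif : ∀ K : Set ℂ, K ⊆ ball 0 1 → IsCompact K →
      TendstoUniformlyOn f 0 atTop K) :
    Tendsto (fun n => spNorm p (fun z => deriv (f n) (φ z))) atTop (nhds 0) :=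
  stmt4_general p hp φ hφSp M hM hφsup f hfSp hunif
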